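/- Let T be the (q+1)-homogeneous rooted tree, q ≥ 1, let φ be a self-map of T and let 1 ≤ p < ∞. If C_φ is a bounded operator on T_{p,0} (in particular C_φ maps T_{p,0} into T_{p,0}), then for every vertex v ∈ T one has (c_{|v|}/c_n) · N_φ(n,v) → 0 as n → ∞. -/

import Mathlib

/-! Test `C_φ` on the indicator `δ_v = Pi.single v 1` of a vertex: `δ_v` lies in `T_{p,0}`, hence so
does `δ_v ∘ φ`, and `M_p(n, δ_v ∘ φ)^p = N_φ(n, v) / c_n`. -/

open scoped BigOperators Classical

noncomputable section

/-- `treeC q n` is the number `c_n` of vertices at level `n` of the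
`(q+1)`-homogeneous rooted tree: `c_0 = 1` and `c_n = (q+1) q^(n-1)` for `n ≥ 1`. -/
def treeC (q n : ℕ) : ℕ := if n = 0 then 1 else (q + 1) * q ^ (n - 1)

/-- An abstract `(q+1)`-homogeneous rooted tree, described by its vertex set, root,
level function `|·|` (graph distance to the root), and the level counts:
level `n` contains exactly `c_n = treeC q n` vertices. -/
structure HomTree (q : ℕ) where
  V : Type
  root : V
  level : V → ℕ
  level_eq_zero_iff : ∀ v : V, level v = 0 ↔ v = root
  finiteLevel : ∀ n : ℕ, {v : V | level v = n}.Finite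
  card_level : ∀ n : ℕ, (finiteLevel n).toFinset.card = treeC q n

namespace HomTree

variable {q : ℕ} (T : HomTree q)

/-- The set `D_n` of vertices of level `n`, as a finset. -/
def levelFinset (n : ℕ) : Finset T.V := (T.finiteLevel n).toFinset

/-- `M_p(n, f)` for `0 < p < ∞`:
`M_p(n,f) = ((1/c_n) ∑_{|v|=n} |f v|^p)^(1/p)` (which equals `|f o|` for `n = 0`). -/
def Mp (p : ℝ) (n : ℕ) (f : T.V → ℂ) : ℝ :=
  ((1 / (treeC q n : ℝ)) * ∑ v ∈ T.levelFinset n, ‖f v‖ ^ p) ^ (1 / p)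

/-- `M_∞(n, f) = max_{|v| = n} |f v|`. -/
def Minf (n : ℕ) (f : T.V → ℂ) : ℝ :=
  sSup ((fun v => ‖f v‖) '' {v : T.V | T.level v = n})

/-- `f ∈ T_p`, i.e. `‖f‖_p = sup_n M_p(n,f) < ∞`. -/
def memTp (p : ℝ) (f : T.V → ℂ) : Prop := BddAbove (Set.range fun n => T.Mp p n f)

/-- `‖f‖_p = sup_n M_p(n, f)`. -/
def normTp (p : ℝ) (f : T.V → ℂ) : ℝ := ⨆ n, T.Mp p n f

/-- `f ∈ T_∞`. -/
def memTinf (f : T.V → ℂ) : Prop := BddAbove (Set.range fun n => T.Minf n f)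

/-- `‖f‖_∞ = sup_n M_∞(n, f)`. -/
def normTinf (f : T.V → ℂ) : ℝ := ⨆ n, T.Minf n f

/-- `f ∈ T_{p,0}`: `f ∈ T_p` and `M_p(n,f) → 0` as `n → ∞`. -/
def memTp0 (p : ℝ) (f : T.V → ℂ) : Prop :=
  T.memTp p f ∧ Filter.Tendsto (fun n => T.Mp p n f) Filter.atTop (nhds 0)

/-- `f ∈ T_{∞,0}`. -/
def memTinf0 (f : T.V → ℂ) : Prop :=
  T.memTinf f ∧ Filter.Tendsto (fun n => T.Minf n f) Filter.atTop (nhds 0)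

/-- `N_φ(n, w)`: the number of preimages of `w` under `φ` at level `n`. -/
def Nphi (phi : T.V → T.V) (n : ℕ) (w : T.V) : ℕ :=
  ((T.levelFinset n).filter fun v => phi v = w).card

/-- `N_{m,n} = max_{|w| = m} N_φ(n, w)`. -/
def Nmax (phi : T.V → T.V) (m n : ℕ) : ℕ :=
  (T.levelFinset m).sup fun w => T.Nphi phi n w

/-- `C_φ` is a bounded operator on `T_p`: it maps `T_p` into `T_p` and
`‖f ∘ φ‖_p ≤ C ‖f‖_p` for some constant `C`. -/
def BoundedCompTp (p : ℝ) (phi : T.V → T.V) : Prop :=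
  (∀ f : T.V → ℂ, T.memTp p f → T.memTp p (f ∘ phi)) ∧
  ∃ C : ℝ, ∀ f : T.V → ℂ, T.memTp p f → T.normTp p (f ∘ phi) ≤ C * T.normTp p f

/-- The operator norm of `C_φ` on `T_p`: `sup {‖f ∘ φ‖_p : f ∈ T_p, ‖f‖_p = 1}`. -/
def opNormTp (p : ℝ) (phi : T.V → T.V) : ℝ :=
  sSup {x : ℝ | ∃ f : T.V → ℂ, T.memTp p f ∧ T.normTp p f = 1 ∧ x = T.normTp p (f ∘ phi)}

/-- `C_φ` is a bounded operator on `T_{p,0}`. -/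
def BoundedCompTp0 (p : ℝ) (phi : T.V → T.V) : Prop :=
  (∀ f : T.V → ℂ, T.memTp0 p f → T.memTp0 p (f ∘ phi)) ∧
  ∃ C : ℝ, ∀ f : T.V → ℂ, T.memTp0 p f → T.normTp p (f ∘ phi) ≤ C * T.normTp p f

/-- The operator norm of `C_φ` on `T_{p,0}`. -/
def opNormTp0 (p : ℝ) (phi : T.V → T.V) : ℝ :=
  sSup {x : ℝ | ∃ f : T.V → ℂ, T.memTp0 p f ∧ T.normTp p f = 1 ∧ x = T.normTp p (f ∘ phi)}

/-- `C_φ` is a bounded operator on `T_{∞,0}`. -/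
def BoundedCompTinf0 (phi : T.V → T.V) : Prop :=
  (∀ f : T.V → ℂ, T.memTinf0 f → T.memTinf0 (f ∘ phi)) ∧
  ∃ C : ℝ, ∀ f : T.V → ℂ, T.memTinf0 f → T.normTinf (f ∘ phi) ≤ C * T.normTinf f

end HomTree

namespace HomTree

variable {q : ℕ} (T : HomTree q)

theorem mem_levelFinset {n : ℕ} {w : T.V} : w ∈ T.levelFinset n ↔ T.level w = n :=
  Set.Finite.mem_toFinset _

theorem Mp_nonneg (p : ℝ) (n : ℕ) (f : T.V → ℂ) : 0 ≤ T.Mp p n f := by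
  unfold Mp
  positivity

theorem Mp_rpow {p : ℝ} (hp : p ≠ 0) (n : ℕ) (f : T.V → ℂ) :
    T.Mp p n f ^ p = 1 / (treeC q n : ℝ) * ∑ w ∈ T.levelFinset n, ‖f w‖ ^ p := by
  rw [Mp, one_div p, Real.rpow_inv_rpow (by positivity) hp]

theorem sum_norm_rpow_single_comp {α : Type*} {p : ℝ} (hp : p ≠ 0) (s : Finset α)
    (phi : α → T.V) (v : T.V) :
    ∑ w ∈ s, ‖(Pi.single v (1 : ℂ) ∘ phi) w‖ ^ p = (s.filter fun w => phi w = v).card := by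
  simp [Pi.single_apply, apply_ite, Real.zero_rpow hp, Finset.sum_boole]

theorem Mp_single_comp_rpow {p : ℝ} (hp : p ≠ 0) (phi : T.V → T.V) (n : ℕ) (v : T.V) :
    T.Mp p n (Pi.single v 1 ∘ phi) ^ p = T.Nphi phi n v / treeC q n := by
  rw [Mp_rpow T hp, T.sum_norm_rpow_single_comp hp, Nphi, one_div_mul_eq_div]

theorem Nphi_id (n : ℕ) (v : T.V) : T.Nphi id n v = if T.level v = n then 1 else 0 := by
  rw [Nphi, Finset.card_filter]
  simp [T.mem_levelFinset]

theorem memTp0_single {p : ℝ} (hp : 0 < p) (v : T.V) : T.memTp0 p (Pi.single v 1) := by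
  have hMp : ∀ n, T.Mp p n (Pi.single v 1) = (T.Nphi id n v / treeC q n : ℝ) ^ p⁻¹ := by
    intro n
    rw [← T.Mp_single_comp_rpow hp.ne', Real.rpow_rpow_inv (T.Mp_nonneg p n _) hp.ne']
    rfl
  constructor
  · refine ⟨1, Set.forall_mem_range.2 fun n => ?_⟩
    have hN : (T.Nphi id n v : ℝ) ≤ 1 := by
      rw [T.Nphi_id]
      split_ifs <;> norm_num
    rw [hMp, div_eq_mul_inv]
    exact Real.rpow_le_one (by positivity)
      (mul_le_one₀ hN (by positivity) (Nat.cast_inv_le_one _)) (by positivity)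
  · refine tendsto_const_nhds.congr' ?_
    filter_upwards [Filter.eventually_gt_atTop (T.level v)] with n hn
    rw [hMp, T.Nphi_id, if_neg hn.ne, Nat.cast_zero, zero_div,
      Real.zero_rpow (inv_ne_zero hp.ne')]

end HomTree

theorem preimage_count_tendsto_zero_general (q : ℕ) (T : HomTree q)
    (p : ℝ) (hp : 1 ≤ p) (phi : T.V → T.V) (hb : T.BoundedCompTp0 p phi) :
    ∀ v : T.V, Filter.Tendsto
      (fun n : ℕ => ((treeC q (T.level v) : ℝ) / (treeC q n : ℝ)) * (T.Nphi phi n v : ℝ))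
      Filter.atTop (nhds 0) := by
  intro v
  have hp0 : 0 < p := by linarith
  have hlim := ((hb.1 _ (T.memTp0_single hp0 v)).2.rpow_const (Or.inr hp0.le)).const_mul
    (treeC q (T.level v) : ℝ)
  rw [Real.zero_rpow hp0.ne', mul_zero] at hlim
  refine hlim.congr fun n => ?_
  rw [T.Mp_single_comp_rpow hp0.ne']
  ring

/-- If `C_φ` is bounded on `T_{p,0}` (`1 ≤ p < ∞`), then for every vertex `v`,
`(c_{|v|}/c_n) · N_φ(n, v) → 0` as `n → ∞`. -/
theorem preimage_count_tendsto_zero (q : ℕ) (hq : 1 ≤ q) (T : HomTree q)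
    (p : ℝ) (hp : 1 ≤ p) (phi : T.V → T.V) (hb : T.BoundedCompTp0 p phi) :
    ∀ v : T.V, Filter.Tendsto
      (fun n : ℕ => ((treeC q (T.level v) : ℝ) / (treeC q n : ℝ)) * (T.Nphi phi n v : ℝ))
      Filter.atTop (nhds 0) :=
  preimage_count_tendsto_zero_general q T p hp phi hb
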